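/- Fix reals a ∈ [0,1) and b. For each n ≥ 1, define the spike s_n : ℕ → ℝ by s_n w = (n:ℝ)^b if |(w:ℝ) - n/4| ≤ (n:ℝ)^a/2 and s_n w = 0 otherwise, and the cost c_n(z) = |z| + s_n(|z|) on bitstrings z : Fin n → Bool, where |z| is the Hamming weight. Let C_n be the diagonal matrix with entry c_n(z) at z, let B'_n = ∑ i, X_i be the mixer sum, let u_n be the uniform vector with entries 2^{-n/2}, and let ψ_f(n) = (Matrix.exp (I·(π/4)·B'_n) * Matrix.exp (-I·(π/2)·C_n)).mulVec u_n. Then ‖ψ_f(n) 0‖² → 1 as n → ∞, where 0 is the all-false string; i.e., single-round QAOA with angles (π/4, π/2) finds the global minimum of the Hamming ramp with spike with probability tending to 1, for every spike width exponent a ∈ [0,1) and arbitrary height exponent b. -/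

import Mathlib

open Matrix Complex Filter

/-- The bit-flip (Pauli X on qubit `i`) matrix on `n`-bit strings. -/
noncomputable def pauliX (n : ℕ) (i : Fin n) :
    Matrix (Fin n → Bool) (Fin n → Bool) ℂ :=
  Matrix.of fun z z' => if z' = Function.update z i (!(z i)) then 1 else 0

/-- The mixer sum `B' = ∑ᵢ Xᵢ`. -/
noncomputable def mixerSum (n : ℕ) : Matrix (Fin n → Bool) (Fin n → Bool) ℂ :=
  ∑ i, pauliX n i

/-- The Hamming weight of a bitstring: the number of `true` bits. -/
def hammingWeight {n : ℕ} (z : Fin n → Bool) : ℕ :=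
  (Finset.univ.filter fun i => z i = true).card

/-- The rectangular spike of height `n^b` and width `n^a` centered at `n/4`. -/
noncomputable def spike (a b : ℝ) (n : ℕ) (w : ℕ) : ℝ :=
  if |(w : ℝ) - (n : ℝ) / 4| ≤ (n : ℝ) ^ a / 2 then (n : ℝ) ^ b else 0

/-- The Spike cost function `c(z) = |z| + s(|z|)` on `n`-bit strings. -/
noncomputable def spikeCost (a b : ℝ) (n : ℕ) (z : Fin n → Bool) : ℝ :=
  (hammingWeight z : ℝ) + spike a b n (hammingWeight z)

/-- The output state of QAOA1 with angles `(π/4, π/2)` on the Spike instance. -/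
noncomputable def spikeQAOAState (a b : ℝ) (n : ℕ) : (Fin n → Bool) → ℂ :=
  (NormedSpace.exp ((Complex.I * ((Real.pi : ℂ) / 4)) • mixerSum n) *
      NormedSpace.exp ((-Complex.I * ((Real.pi : ℂ) / 2)) •
        Matrix.diagonal fun z => (spikeCost a b n z : ℂ))).mulVec
    fun _ => (((2 : ℝ) ^ (-(n : ℝ) / 2) : ℝ) : ℂ)

/-! The Walsh–Hadamard matrix `W y z = ∏ᵢ (-1)^(yᵢ zᵢ)` satisfies `W * W = 2ⁿ` and diagonalises the
mixer, `B' W = W diag(∑ᵢ (-1)^(yᵢ))`; hence `exp (θ B')` has entries `∏ᵢ (cosh θ or sinh θ)` according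
as `z` and `z'` agree at `i`. At `θ = iπ/4` the amplitude from `0` to `z` is `2^(-n/2) i^|z|`, and the
ramp phase `exp (-iπ|z|/2) = (-i)^|z|` cancels `i^|z|`, so the amplitude at `0` is the average over
`z` of the spike phase `exp (-iπ s(|z|)/2)`. That phase is `1` outside the spike window, and the
window lies in `{|z| ≤ n/4 + n^a/2}`, which by the Chernoff-type bound `#{|z| ≤ t} ≤ 2^t (3/2)^n`
is a fraction at most `2^(n^a/2) (2^(1/4) · 3/4)^n → 0` of all strings. -/

open scoped Real Finset

def bitSign (b : Bool) : ℂ := if b then -1 else 1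

def walshMatrix (n : ℕ) : Matrix (Fin n → Bool) (Fin n → Bool) ℂ :=
  Matrix.of fun y z => ∏ i, bitSign (y i && z i)

lemma prod_ite_eq_pow_hammingWeight {R : Type*} [CommMonoid R] {n : ℕ} (z : Fin n → Bool)
    (x : R) :
    ∏ i, (if z i then x else 1) = x ^ hammingWeight z := by
  rw [← Finset.prod_filter, Finset.prod_const]; rfl

lemma walshMatrix_mul_diagonal_mul_walshMatrix_apply {n : ℕ} (g : Bool → ℂ)
    (z z' : Fin n → Bool) :
    (walshMatrix n * diagonal (fun y : Fin n → Bool => ∏ i, g (y i)) * walshMatrix n) z z' =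
      ∏ i, ((if z i = z' i then g true else -g true) + g false) := by
  have hterm : ∀ y : Fin n → Bool, walshMatrix n z y * (∏ i, g (y i)) * walshMatrix n y z' =
      ∏ i, bitSign (z i && y i) * g (y i) * bitSign (y i && z' i) := fun y => by
    simp only [walshMatrix, of_apply, Finset.prod_mul_distrib]
  rw [mul_apply]
  simp only [mul_diagonal, hterm]
  rw [← Fintype.prod_sum fun i b => bitSign (z i && b) * g b * bitSign (b && z' i)]
  refine Finset.prod_congr rfl fun i _ => ?_
  cases z i <;> cases z' i <;> simp [bitSign]

lemma walshMatrix_mul_self (n : ℕ) : walshMatrix n * walshMatrix n = (2 ^ n : ℂ) • 1 := by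
  ext z z'
  have h := walshMatrix_mul_diagonal_mul_walshMatrix_apply (fun _ => 1) z z'
  simp only [Finset.prod_const_one, diagonal_one, mul_one] at h
  rw [h, Matrix.smul_apply, one_apply]
  split_ifs with hzz
  · subst hzz
    norm_num
  · obtain ⟨i, hi⟩ := Function.ne_iff.mp hzz
    simp only [smul_zero]
    exact Finset.prod_eq_zero (Finset.mem_univ i) (by simp [hi])

lemma pauliX_mul_apply {n : ℕ} (i : Fin n) (A : Matrix (Fin n → Bool) (Fin n → Bool) ℂ)
    (z y : Fin n → Bool) :
    (pauliX n i * A) z y = A (Function.update z i (!z i)) y := by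
  simp [pauliX, mul_apply]

lemma walshMatrix_update_apply {n : ℕ} (z y : Fin n → Bool) (i : Fin n) :
    walshMatrix n (Function.update z i (!z i)) y = bitSign (y i) * walshMatrix n z y := by
  simp only [walshMatrix, of_apply]
  rw [← Finset.mul_prod_erase _ _ (Finset.mem_univ i),
    ← Finset.mul_prod_erase _ _ (Finset.mem_univ i),
    ← mul_assoc, Function.update_self]
  congr 1
  · cases z i <;> cases y i <;> simp [bitSign]
  · exact Finset.prod_congr rfl fun j hj => by
      rw [Function.update_of_ne (Finset.ne_of_mem_erase hj)]

lemma mixerSum_mul_walshMatrix (n : ℕ) :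
    mixerSum n * walshMatrix n =
      walshMatrix n * diagonal fun y : Fin n → Bool => ∑ i, bitSign (y i) := by
  ext z y
  simp only [mixerSum, Finset.sum_mul, Matrix.sum_apply, pauliX_mul_apply, walshMatrix_update_apply,
    mul_diagonal, Finset.mul_sum]
  exact Finset.sum_congr rfl fun i _ => mul_comm _ _

lemma exp_smul_diagonal {ι : Type*} [Fintype ι] [DecidableEq ι] (θ : ℂ) (v : ι → ℂ) :
    NormedSpace.exp (θ • diagonal v) = diagonal fun i => Complex.exp (θ * v i) := by
  rw [← diagonal_smul, Matrix.exp_diagonal]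
  congr 1
  funext i
  rw [Pi.coe_exp, Pi.smul_apply, smul_eq_mul, ← Complex.exp_eq_exp_ℂ]

lemma exp_smul_mixerSum (n : ℕ) (θ : ℂ) :
    NormedSpace.exp (θ • mixerSum n) = (2 ^ n : ℂ)⁻¹ •
      (walshMatrix n *
        diagonal (fun y : Fin n → Bool => ∏ i, Complex.exp (θ * bitSign (y i))) *
          walshMatrix n) := by
  have hsemi : SemiconjBy (walshMatrix n) (θ • diagonal fun y => ∑ i, bitSign (y i))
      (θ • mixerSum n) := by
    rw [SemiconjBy, mul_smul_comm, smul_mul_assoc, mixerSum_mul_walshMatrix]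
  have hexp : walshMatrix n * NormedSpace.exp (θ • diagonal fun y => ∑ i, bitSign (y i)) =
      NormedSpace.exp (θ • mixerSum n) * walshMatrix n :=
    -- matrices have no global Banach-algebra structure; any choice of norm makes `exp_right` apply
    open scoped Norms.Operator in hsemi.exp_right
  simp only [exp_smul_diagonal, Finset.mul_sum, Complex.exp_sum] at hexp
  calc NormedSpace.exp (θ • mixerSum n)
      = (2 ^ n : ℂ)⁻¹ •
          (NormedSpace.exp (θ • mixerSum n) * (walshMatrix n * walshMatrix n)) := by
        rw [walshMatrix_mul_self, mul_smul_comm, Matrix.mul_one, smul_smul,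
          inv_mul_cancel₀ (pow_ne_zero n two_ne_zero), one_smul]
    _ = _ := by rw [← Matrix.mul_assoc, ← hexp]

lemma exp_smul_mixerSum_apply (n : ℕ) (θ : ℂ) (z z' : Fin n → Bool) :
    NormedSpace.exp (θ • mixerSum n) z z' =
      ∏ i, if z i = z' i then Complex.cosh θ else Complex.sinh θ := by
  rw [exp_smul_mixerSum, Matrix.smul_apply,
    walshMatrix_mul_diagonal_mul_walshMatrix_apply (fun b => Complex.exp (θ * bitSign b)),
    smul_eq_mul, inv_mul_eq_iff_eq_mul₀ (pow_ne_zero n two_ne_zero), ← Fin.prod_const,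
    ← Finset.prod_mul_distrib]
  refine Finset.prod_congr rfl fun i _ => ?_
  simp only [bitSign, if_true, if_false, Bool.false_eq_true, mul_one, mul_neg,
    ← Complex.cosh_add_sinh, Complex.cosh_neg, Complex.sinh_neg]
  split_ifs <;> ring

lemma exp_neg_I_pi_div_two_mul_spikeCost (a b : ℝ) {n : ℕ} (z : Fin n → Bool) :
    Complex.exp (-I * (π / 2) * (spikeCost a b n z : ℂ)) =
      (∏ i, if z i then -I else 1) *
        Complex.exp (↑(-(π / 2) * spike a b n (hammingWeight z)) * I) := by
  have hI : (-I) ^ hammingWeight z = Complex.exp (hammingWeight z * -(π / 2 * I)) := by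
    rw [Complex.exp_nat_mul, Complex.exp_neg, Complex.exp_pi_div_two_mul_I, Complex.inv_I]
  rw [prod_ite_eq_pow_hammingWeight, hI, ← Complex.exp_add]
  congr 1
  push_cast [spikeCost]
  ring

lemma sqrt_two_div_two_pow_mul_two_rpow (n : ℕ) :
    (√2 / 2) ^ n * (2 : ℝ) ^ (-(n : ℝ) / 2) = ((2 : ℝ) ^ n)⁻¹ := by
  have hsqrt : √2 ^ n = (2 : ℝ) ^ ((n : ℝ) / 2) := by
    rw [Real.sqrt_eq_rpow, ← Real.rpow_natCast, ← Real.rpow_mul zero_le_two]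
    ring_nf
  rw [div_pow, hsqrt, neg_div, Real.rpow_neg zero_le_two]
  field_simp

lemma spikeQAOAState_apply_false (a b : ℝ) (n : ℕ) :
    spikeQAOAState a b n (fun _ => false) =
      (2 ^ n : ℂ)⁻¹ * ∑ z : Fin n → Bool,
        Complex.exp (↑(-(π / 2) * spike a b n (hammingWeight z)) * I) := by
  have hcosh : Complex.cosh (I * (π / 4)) = (√2 / 2 : ℝ) := by
    rw [mul_comm, Complex.cosh_mul_I, ← Complex.ofReal_ofNat, ← Complex.ofReal_div,
      ← Complex.ofReal_cos, Real.cos_pi_div_four]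
  have hsinh : Complex.sinh (I * (π / 4)) * -I = (√2 / 2 : ℝ) := by
    rw [mul_comm I, Complex.sinh_mul_I, ← Complex.ofReal_ofNat, ← Complex.ofReal_div,
      ← Complex.ofReal_sin, Real.sin_pi_div_four, mul_assoc, mul_neg, Complex.I_mul_I, neg_neg,
      mul_one]
  have hamp : ∀ z : Fin n → Bool,
      (∏ i, if false = z i then Complex.cosh (I * (π / 4)) else Complex.sinh (I * (π / 4))) *
        ∏ i, (if z i then -I else 1) = (√2 / 2 : ℝ) ^ n := fun z => by
    rw [← Finset.prod_mul_distrib, ← Fin.prod_const]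
    refine Finset.prod_congr rfl fun i _ => ?_
    cases z i
    · simp [hcosh]
    · simp [hsinh]
  rw [spikeQAOAState, exp_smul_diagonal, mulVec, dotProduct, Finset.mul_sum]
  refine Finset.sum_congr rfl fun z _ => ?_
  rw [mul_diagonal, exp_smul_mixerSum_apply, exp_neg_I_pi_div_two_mul_spikeCost,
    show ∀ x y w u : ℂ, x * (y * w) * u = x * y * u * w by intros; ring, hamp]
  congr 1
  rw [← Complex.ofReal_pow, ← Complex.ofReal_mul, sqrt_two_div_two_pow_mul_two_rpow]
  push_cast
  rfl

lemma sum_pow_hammingWeight {R : Type*} [CommSemiring R] (n : ℕ) (x : R) :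
    ∑ z : Fin n → Bool, x ^ hammingWeight z = (x + 1) ^ n := by
  simp only [← prod_ite_eq_pow_hammingWeight]
  rw [← Fintype.prod_sum fun (_ : Fin n) (b : Bool) => if b then x else 1]
  simp

lemma card_hammingWeight_le_le (n : ℕ) (t : ℝ) :
    (#{z : Fin n → Bool | (hammingWeight z : ℝ) ≤ t} : ℝ) ≤ 2 ^ t * (3 / 2) ^ n := by
  have hpoint : ∀ z : Fin n → Bool,
      (if (hammingWeight z : ℝ) ≤ t then 1 else 0 : ℝ) ≤
        2 ^ t * (1 / 2) ^ hammingWeight z := by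
    intro z
    split_ifs with hz
    · rw [one_div, inv_pow, ← div_eq_mul_inv, one_le_div (by positivity), ← Real.rpow_natCast]
      exact Real.rpow_le_rpow_of_exponent_le one_le_two hz
    · positivity
  calc (#{z : Fin n → Bool | (hammingWeight z : ℝ) ≤ t} : ℝ)
      = ∑ z : Fin n → Bool, if (hammingWeight z : ℝ) ≤ t then 1 else 0 := by
        rw [Finset.sum_boole]
    _ ≤ ∑ z : Fin n → Bool, 2 ^ t * (1 / 2) ^ hammingWeight z :=
        Finset.sum_le_sum fun z _ => hpoint z
    _ = 2 ^ t * (3 / 2) ^ n := by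
        rw [← Finset.mul_sum, sum_pow_hammingWeight]
        norm_num

lemma norm_spikeQAOAState_apply_false_sub_one_le (a b : ℝ) (n : ℕ) :
    ‖spikeQAOAState a b n (fun _ => false) - 1‖ ≤
      2 * ((2 : ℝ) ^ n)⁻¹ * (2 ^ ((n : ℝ) / 4 + (n : ℝ) ^ a / 2) * (3 / 2) ^ n) := by
  set T : ℝ := (n : ℝ) / 4 + (n : ℝ) ^ a / 2 with hT
  set e : (Fin n → Bool) → ℂ :=
    fun z => Complex.exp (↑(-(π / 2) * spike a b n (hammingWeight z)) * I)
  have hpoint : ∀ z, ‖e z - 1‖ ≤ 2 * if (hammingWeight z : ℝ) ≤ T then 1 else 0 := by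
    intro z
    by_cases hspike : |(hammingWeight z : ℝ) - n / 4| ≤ (n : ℝ) ^ a / 2
    · rw [if_pos (by linarith [(abs_le.mp hspike).2]), mul_one]
      calc ‖e z - 1‖ ≤ ‖e z‖ + ‖(1 : ℂ)‖ := norm_sub_le _ _
        _ = 2 := by rw [Complex.norm_exp_ofReal_mul_I, norm_one]; norm_num
    · have he : e z = 1 := by simp [e, spike, hspike]
      rw [he, sub_self, norm_zero]
      positivity
  have hsum :
      spikeQAOAState a b n (fun _ => false) - 1 = (2 ^ n : ℂ)⁻¹ * ∑ z, (e z - 1) := by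
    rw [spikeQAOAState_apply_false, Finset.sum_sub_distrib, mul_sub, Finset.sum_const,
      Finset.card_univ, Fintype.card_fun, Fintype.card_bool, Fintype.card_fin, nsmul_one,
      Nat.cast_pow, Nat.cast_two,
      inv_mul_cancel₀ (pow_ne_zero n two_ne_zero)]
  calc ‖spikeQAOAState a b n (fun _ => false) - 1‖
      ≤ ((2 : ℝ) ^ n)⁻¹ * ∑ z, 2 * if (hammingWeight z : ℝ) ≤ T then 1 else 0 := by
        rw [hsum, norm_mul, norm_inv, norm_pow, Complex.norm_two]
        gcongr
        exact (norm_sum_le _ _).trans (Finset.sum_le_sum fun z _ => hpoint z)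
    _ = 2 * ((2 : ℝ) ^ n)⁻¹ * #{z : Fin n → Bool | (hammingWeight z : ℝ) ≤ T} := by
        rw [← Finset.mul_sum, Finset.sum_boole]
        ring
    _ ≤ 2 * ((2 : ℝ) ^ n)⁻¹ * (2 ^ T * (3 / 2) ^ n) := by
        gcongr
        exact card_hammingWeight_le_le n T

lemma tendsto_mul_rpow_add_mul_atBot {a : ℝ} (ha : a < 1) (α : ℝ) {β : ℝ} (hβ : β < 0) :
    Tendsto (fun n : ℕ => α * (n : ℝ) ^ a + β * n) atTop atBot := by
  have hrpow : Tendsto (fun n : ℕ => α * (n : ℝ) ^ (a - 1) + β) atTop (nhds β) := by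
    have h := ((tendsto_rpow_neg_atTop (sub_pos.mpr ha)).comp
      tendsto_natCast_atTop_atTop).const_mul α
    simpa using h.add_const β
  refine (tendsto_natCast_atTop_atTop.atTop_mul_neg hβ hrpow).congr' ?_
  filter_upwards [eventually_ge_atTop 1] with n hn
  have hn0 : (n : ℝ) ≠ 0 := by positivity
  rw [Real.rpow_sub_one hn0]
  field_simp

lemma tendsto_spike_error_atTop {a : ℝ} (ha : a < 1) :
    Tendsto (fun n : ℕ =>
        2 * ((2 : ℝ) ^ n)⁻¹ * (2 ^ ((n : ℝ) / 4 + (n : ℝ) ^ a / 2) * (3 / 2) ^ n))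
      atTop (nhds 0) := by
  have hβ : Real.log (3 / 2) - 3 / 4 * Real.log 2 < 0 := by
    have h32 := Real.log_le_sub_one_of_pos (by norm_num : (0 : ℝ) < 3 / 2)
    linarith [Real.log_two_gt_d9]
  have hexp : ∀ n : ℕ,
      2 * ((2 : ℝ) ^ n)⁻¹ * (2 ^ ((n : ℝ) / 4 + (n : ℝ) ^ a / 2) * (3 / 2) ^ n) =
        2 * Real.exp (Real.log 2 / 2 * (n : ℝ) ^ a +
          (Real.log (3 / 2) - 3 / 4 * Real.log 2) * n) := by
    intro n
    rw [← Real.rpow_natCast 2, ← Real.rpow_natCast (3 / 2), Real.rpow_def_of_pos two_pos n,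
      Real.rpow_def_of_pos two_pos (n / 4 + _),
      Real.rpow_def_of_pos (by norm_num : (0 : ℝ) < 3 / 2),
      ← Real.exp_neg, mul_assoc, ← Real.exp_add, ← Real.exp_add]
    ring_nf
  simp only [hexp]
  simpa using (Real.tendsto_exp_atBot.comp (tendsto_mul_rpow_add_mul_atBot ha _ hβ)).const_mul 2

theorem qaoa1_spike_success_general (a b : ℝ) (ha₁ : a < 1) :
    Tendsto (fun n : ℕ => ‖spikeQAOAState a b n (fun _ => false)‖ ^ 2)
      atTop (nhds 1) := by
  have hψ : Tendsto (fun n : ℕ => spikeQAOAState a b n (fun _ => false)) atTop (nhds 1) :=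
    tendsto_iff_norm_sub_tendsto_zero.mpr <| squeeze_zero (fun _ => norm_nonneg _)
      (norm_spikeQAOAState_apply_false_sub_one_le a b) (tendsto_spike_error_atTop ha₁)
  simpa using hψ.norm.pow 2

/-- Single-round QAOA with angles `(π/4, π/2)` finds the global minimum of
the Hamming ramp with spike with probability tending to 1, for every spike
width exponent `a ∈ [0,1)` and arbitrary height exponent `b`. -/
theorem qaoa1_spike_success (a b : ℝ) (ha₀ : 0 ≤ a) (ha₁ : a < 1) :
    Tendsto (fun n : ℕ => ‖spikeQAOAState a b n (fun _ => false)‖ ^ 2)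
      atTop (nhds 1) :=
  qaoa1_spike_success_general a b ha₁
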